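/- Let μ ∈ ℝ, σ > 0, A > 0. Then ∫ max(A - e^x, 0) d(gaussianReal μ σ²)(x) = A·Φ(-d₂) - M₁·Φ(-d₁), where M₁ = e^{μ + σ²/2}, d₁ = (log(M₁/A) + σ²/2)/σ, d₂ = (log(M₁/A) - σ²/2)/σ, and Φ is the cumulative distribution function of the standard normal distribution. -/

import Mathlib

/-!
Above the log-strike `log A` the payoff vanishes, so the expectation splits as
`A · P(X ≤ log A) - E[e^X; X ≤ log A]`. Multiplying the `N(μ, v)` density by `e^x` gives
`e^{μ + v/2}` times the `N(μ + v, v)` density (exponential tilting), so both terms are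
Gaussian probabilities of `Iic (log A)`, i.e. values of `Φ` after standardization.
-/

open MeasureTheory ProbabilityTheory Real Set
open scoped NNReal

lemma max_sub_exp_zero_eq_indicator {A : ℝ} (hA : 0 < A) (x : ℝ) :
    max (A - exp x) 0 = (Iic (log A)).indicator (fun x ↦ A - exp x) x := by
  by_cases hx : x ≤ log A
  · rw [indicator_of_mem (mem_Iic.2 hx), max_eq_left]
    rwa [sub_nonneg, ← le_log_iff_exp_le hA]
  · rw [indicator_of_notMem (mt mem_Iic.1 hx), max_eq_right]
    rw [not_le, ← exp_lt_exp, exp_log hA] at hx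
    linarith

namespace ProbabilityTheory

lemma exp_mul_gaussianPDFReal (μ : ℝ) (v : ℝ≥0) (x : ℝ) :
    exp x * gaussianPDFReal μ v x = exp (μ + v / 2) * gaussianPDFReal (μ + v) v x := by
  rcases eq_or_ne v 0 with rfl | hv
  · simp [gaussianPDFReal_zero_var]
  have hv' : (v : ℝ) ≠ 0 := NNReal.coe_ne_zero.mpr hv
  have hexp : x + -(x - μ) ^ 2 / (2 * v) = μ + v / 2 + -(x - (μ + v)) ^ 2 / (2 * v) := by
    field_simp
    ring
  simp only [gaussianPDFReal]
  rw [mul_left_comm, ← exp_add, hexp, exp_add]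
  ring

lemma setIntegral_gaussianReal_eq_setIntegral_mul (μ : ℝ) {v : ℝ≥0} (hv : v ≠ 0)
    (f : ℝ → ℝ) {s : Set ℝ} (hs : MeasurableSet s) :
    ∫ x in s, f x ∂gaussianReal μ v = ∫ x in s, gaussianPDFReal μ v x * f x := by
  rw [gaussianReal_of_var_ne_zero μ hv, gaussianPDF_def,
    setIntegral_withDensity_eq_setIntegral_toReal_smul
      (measurable_gaussianPDFReal μ v).ennreal_ofReal (ae_of_all _ fun _ ↦ ENNReal.ofReal_lt_top)
      f hs]
  simp_rw [ENNReal.toReal_ofReal (gaussianPDFReal_nonneg μ v _), smul_eq_mul]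

lemma gaussianReal_real_eq_setIntegral (μ : ℝ) {v : ℝ≥0} (hv : v ≠ 0) (s : Set ℝ) :
    (gaussianReal μ v).real s = ∫ x in s, gaussianPDFReal μ v x := by
  rw [measureReal_def, gaussianReal_apply_eq_integral μ hv,
    ENNReal.toReal_ofReal
      (setIntegral_nonneg_of_ae (ae_of_all _ (gaussianPDFReal_nonneg μ v)))]

lemma setIntegral_exp_gaussianReal (μ : ℝ) {v : ℝ≥0} (hv : v ≠ 0) {s : Set ℝ}
    (hs : MeasurableSet s) :
    ∫ x in s, exp x ∂gaussianReal μ v =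
      exp (μ + v / 2) * (gaussianReal (μ + v) v).real s := by
  simp_rw [setIntegral_gaussianReal_eq_setIntegral_mul μ hv _ hs, mul_comm _ (exp _),
    exp_mul_gaussianPDFReal, integral_const_mul, gaussianReal_real_eq_setIntegral _ hv]

lemma gaussianReal_map_standardize (μ : ℝ) {v : ℝ≥0} (hv : v ≠ 0) :
    (gaussianReal μ v).map (fun x ↦ (x - μ) / √v) = gaussianReal 0 1 := by
  have : (fun x ↦ (x - μ) / √v) = (· / √v) ∘ (· - μ) := rfl
  rw [this, ← Measure.map_map (by fun_prop) (by fun_prop), gaussianReal_map_sub_const,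
    gaussianReal_map_div_const, sub_self, zero_div]
  congr
  ext
  simp [hv]

lemma gaussianReal_real_Iic (μ : ℝ) {v : ℝ≥0} (hv : v ≠ 0) (L : ℝ) :
    (gaussianReal μ v).real (Iic L) = cdf (gaussianReal 0 1) ((L - μ) / √v) := by
  rw [cdf_eq_real, ← gaussianReal_map_standardize μ hv,
    map_measureReal_apply (by fun_prop) measurableSet_Iic]
  congr
  ext x
  simp [div_le_div_iff_of_pos_right (by positivity : 0 < √(v : ℝ))]

lemma integral_max_sub_exp_gaussianReal (μ : ℝ) {v : ℝ≥0} (hv : v ≠ 0) {A : ℝ}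
    (hA : 0 < A) :
    ∫ x, max (A - exp x) 0 ∂gaussianReal μ v =
      A * cdf (gaussianReal 0 1) ((log A - μ) / √v) -
        exp (μ + v / 2) * cdf (gaussianReal 0 1) ((log A - (μ + v)) / √v) := by
  have hexp : IntegrableOn exp (Iic (log A)) (gaussianReal μ v) :=
    Measure.integrableOn_of_bounded (measure_ne_top _ _) continuous_exp.aestronglyMeasurable
      (M := A) <| (ae_restrict_iff' measurableSet_Iic).2 <| ae_of_all _ fun x hx ↦ by
        rw [norm_of_nonneg (exp_nonneg x), ← le_log_iff_exp_le hA]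
        exact hx
  simp_rw [max_sub_exp_zero_eq_indicator hA]
  rw [integral_indicator measurableSet_Iic, integral_sub (integrable_const A) hexp,
    setIntegral_const, setIntegral_exp_gaussianReal μ hv measurableSet_Iic,
    gaussianReal_real_Iic _ hv, gaussianReal_real_Iic _ hv, smul_eq_mul, mul_comm]

end ProbabilityTheory

/-- Black–Scholes–Merton put expectation: for a lognormal underlying `e^x`,
`x ~ N(μ, σ²)`, and strike `A > 0`,
`E[(A - e^x)⁺] = A·Φ(-d₂) - M₁·Φ(-d₁)` with `M₁ = e^{μ + σ²/2}`,
`d₁ = (log(M₁/A) + σ²/2)/σ`, `d₂ = (log(M₁/A) - σ²/2)/σ`,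
and `Φ` the standard normal CDF. -/
theorem blackScholes_put_expectation (μ σ A : ℝ) (hσ : 0 < σ) (hA : 0 < A)
    (Φ : ℝ → ℝ) (hΦ : Φ = fun x => ProbabilityTheory.cdf (gaussianReal 0 1) x)
    (M₁ d₁ d₂ : ℝ)
    (hM₁ : M₁ = Real.exp (μ + σ ^ 2 / 2))
    (hd₁ : d₁ = (Real.log (M₁ / A) + σ ^ 2 / 2) / σ)
    (hd₂ : d₂ = (Real.log (M₁ / A) - σ ^ 2 / 2) / σ) :
    ∫ x, max (A - Real.exp x) 0 ∂(gaussianReal μ ⟨σ ^ 2, sq_nonneg σ⟩) =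
      A * Φ (-d₂) - M₁ * Φ (-d₁) := by
  set v : ℝ≥0 := ⟨σ ^ 2, sq_nonneg σ⟩
  have hv : (v : ℝ) = σ ^ 2 := rfl
  have hv₀ : v ≠ 0 := by
    rw [← NNReal.coe_ne_zero, hv]
    positivity
  have hlog : log (M₁ / A) = μ + σ ^ 2 / 2 - log A := by
    rw [hM₁, log_div (exp_ne_zero _) hA.ne', log_exp]
  have hd₂' : -d₂ = (log A - μ) / √v := by
    rw [hd₂, hlog, hv, sqrt_sq hσ.le]
    ring
  have hd₁' : -d₁ = (log A - (μ + v)) / √v := by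
    rw [hd₁, hlog, hv, sqrt_sq hσ.le]
    field_simp
    ring
  rw [integral_max_sub_exp_gaussianReal μ hv₀ hA, hΦ, hM₁, hd₁', hd₂', hv]
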